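/- Under the hypotheses of the previous SDP bound, let v̂ be a unit leading eigenvector of M̂. Then ‖v̂v̂ᵀ - M̂‖₂ ≤ ‖vvᵀ - M̂‖₂, and consequently L(v̂, v) := (1 - (v̂ᵀv)²)^{1/2} ≤ √2·‖vvᵀ - M̂‖₂ ≤ 4√2·λk/θ + 2√(ε/θ). -/

import Mathlib

open Matrix Finset
open scoped Classical

open scoped Matrix.Norms.Frobenius

/-! The leading eigenvector minimises `x ↦ ‖x xᵀ - M̂‖` over unit vectors, since
`‖x xᵀ - M̂‖² = 1 - 2 xᵀ M̂ x + ‖M̂‖²`; with `‖v̂ v̂ᵀ - v vᵀ‖² = 2 (1 - (v̂ᵀ v)²)` and the triangle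
inequality through `M̂` this gives the first two claims.

For the third, `D = ‖v vᵀ - M̂‖` satisfies `θ D² / 2 ≤ 2 λ k D + ε`. Indeed `‖M̂‖ ≤ tr M̂ = 1`
gives `D² ≤ 2 (1 - vᵀ M̂ v)`; the spectral gap makes `λ₁ I - S - θ (I - v vᵀ)` positive
semidefinite, so `θ (1 - vᵀ M̂ v) ≤ ⟨S, v vᵀ - M̂⟩`; replacing `S` by `Ŝ` costs `λ ‖v vᵀ - M̂‖₁`,
optimality of `M̂` against `v vᵀ` bounds `⟨Ŝ, v vᵀ - M̂⟩`, and the remaining `ℓ¹` terms only see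
the `k × k` support block of `v vᵀ`, on which Cauchy–Schwarz gives at most `k D`. -/

lemma le_add_of_sq_le_mul_add_sq {x a b : ℝ} (ha : 0 ≤ a) (hb : 0 ≤ b)
    (h : x ^ 2 ≤ a * x + b ^ 2) : x ≤ a + b := by
  nlinarith

namespace Matrix

variable {m n : Type*} [Fintype m] [Fintype n]

theorem frobenius_norm_eq_sqrt (A : Matrix m n ℝ) : ‖A‖ = √(∑ i, ∑ j, A i j ^ 2) := by
  simp [frobenius_norm_def, Real.sqrt_eq_rpow]

theorem frobenius_norm_sq (A : Matrix m n ℝ) : ‖A‖ ^ 2 = ∑ i, ∑ j, A i j ^ 2 := by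
  rw [frobenius_norm_eq_sqrt, Real.sq_sqrt (by positivity)]

theorem PosSemidef.sq_apply_le [DecidableEq n] {M : Matrix n n ℝ} (hM : M.PosSemidef)
    (i j : n) : M i j ^ 2 ≤ M i i * M j j := by
  simpa [toBilin'_single] using (toBilin' M).apply_sq_le_of_symm
    (fun x => by simpa [toBilin'_apply'] using hM.dotProduct_mulVec_nonneg x)
    (LinearMap.BilinForm.isSymm_iff.mp <| isSymm_toBilin'_iff_isSymm.mpr <| by
      simpa [IsSymm, IsHermitian] using hM.isHermitian)
    (Pi.single i 1) (Pi.single j 1)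

theorem PosSemidef.frobenius_norm_le_trace {M : Matrix n n ℝ} (hM : M.PosSemidef) :
    ‖M‖ ≤ M.trace := by
  refine (pow_le_pow_iff_left₀ (norm_nonneg M) hM.trace_nonneg two_ne_zero).mp ?_
  calc ‖M‖ ^ 2 = ∑ i, ∑ j, M i j ^ 2 := frobenius_norm_sq M
    _ ≤ ∑ i, ∑ j, M i i * M j j := by gcongr with i _ j _; exact hM.sq_apply_le i j
    _ = M.trace ^ 2 := by rw [← Finset.sum_mul_sum, sq]; rfl

theorem trace_mul_nonneg_of_posSemidef {A B : Matrix n n ℝ} (hA : ∀ x, 0 ≤ x ⬝ᵥ A *ᵥ x)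
    (hB : B.PosSemidef) : 0 ≤ (A * B).trace := by
  obtain ⟨r, u, rfl⟩ := posSemidef_iff_eq_sum_vecMulVec.mp hB
  rw [Finset.mul_sum, trace_sum]
  refine Finset.sum_nonneg fun i _ => ?_
  rw [mul_vecMulVec, trace_vecMulVec, star_trivial, dotProduct_comm]
  exact hA (u i)

section OuterProduct

variable {x y : n → ℝ}

theorem frobenius_norm_vecMulVec_sub_sq (hx : x ⬝ᵥ x = 1) (M : Matrix n n ℝ) :
    ‖vecMulVec x x - M‖ ^ 2 = 1 - 2 * (x ⬝ᵥ M *ᵥ x) + ‖M‖ ^ 2 := by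
  have hxx : ∑ i, ∑ j, (x i * x j) ^ 2 = (x ⬝ᵥ x) * (x ⬝ᵥ x) := by
    rw [dotProduct, Finset.sum_mul_sum]
    exact Finset.sum_congr rfl fun i _ => Finset.sum_congr rfl fun j _ => by ring
  have hxMx : ∑ i, ∑ j, 2 * (x i * x j) * M i j = 2 * (x ⬝ᵥ M *ᵥ x) := by
    simp only [dotProduct, mulVec, Finset.mul_sum]
    exact Finset.sum_congr rfl fun i _ => Finset.sum_congr rfl fun j _ => by ring
  simp only [frobenius_norm_sq, sub_apply, vecMulVec_apply, sub_sq, Finset.sum_add_distrib,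
    Finset.sum_sub_distrib, hxx, hxMx, hx, one_mul]

theorem frobenius_norm_vecMulVec_sub_le_of_dotProduct_mulVec_le {M : Matrix n n ℝ}
    (hx : x ⬝ᵥ x = 1) (hy : y ⬝ᵥ y = 1) (hxy : y ⬝ᵥ M *ᵥ y ≤ x ⬝ᵥ M *ᵥ x) :
    ‖vecMulVec x x - M‖ ≤ ‖vecMulVec y y - M‖ := by
  refine (pow_le_pow_iff_left₀ (norm_nonneg _) (norm_nonneg _) two_ne_zero).mp ?_
  rw [frobenius_norm_vecMulVec_sub_sq hx, frobenius_norm_vecMulVec_sub_sq hy]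
  linarith

theorem frobenius_norm_vecMulVec_sub_vecMulVec_sq (hx : x ⬝ᵥ x = 1) (hy : y ⬝ᵥ y = 1) :
    ‖vecMulVec x x - vecMulVec y y‖ ^ 2 = 2 * (1 - (x ⬝ᵥ y) ^ 2) := by
  have hyy : ‖vecMulVec y y‖ ^ 2 = 1 := by
    simpa using frobenius_norm_vecMulVec_sub_sq hy 0
  rw [frobenius_norm_vecMulVec_sub_sq hx, hyy, dotProduct_mulVec, vecMul_vecMulVec,
    smul_dotProduct, smul_eq_mul, dotProduct_comm y x]
  ring

theorem frobenius_norm_vecMulVec_sub_sq_le {M : Matrix n n ℝ} (hx : x ⬝ᵥ x = 1)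
    (hM : ‖M‖ ≤ 1) : ‖vecMulVec x x - M‖ ^ 2 ≤ 2 * (1 - x ⬝ᵥ M *ᵥ x) := by
  rw [frobenius_norm_vecMulVec_sub_sq hx]
  nlinarith [norm_nonneg M]

theorem sqrt_one_sub_sq_dotProduct_le {M : Matrix n n ℝ} (hx : x ⬝ᵥ x = 1) (hy : y ⬝ᵥ y = 1)
    (hxy : ‖vecMulVec x x - M‖ ≤ ‖vecMulVec y y - M‖) :
    √(1 - (x ⬝ᵥ y) ^ 2) ≤ √2 * ‖vecMulVec y y - M‖ := by
  have h2 : (0 : ℝ) < √2 := by positivity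
  have hdist : √2 * √(1 - (x ⬝ᵥ y) ^ 2) = ‖vecMulVec x x - vecMulVec y y‖ := by
    rw [← Real.sqrt_mul zero_le_two, ← frobenius_norm_vecMulVec_sub_vecMulVec_sq hx hy,
      Real.sqrt_sq (norm_nonneg _)]
  refine le_of_mul_le_mul_left ?_ h2
  calc √2 * √(1 - (x ⬝ᵥ y) ^ 2) = ‖vecMulVec x x - vecMulVec y y‖ := hdist
    _ ≤ ‖vecMulVec x x - M‖ + ‖vecMulVec y y - M‖ := by
      rw [norm_sub_rev (vecMulVec y y) M]
      exact norm_sub_le_norm_sub_add_norm_sub (vecMulVec x x) M (vecMulVec y y)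
    _ ≤ √2 * (√2 * ‖vecMulVec y y - M‖) := by
      rw [← mul_assoc, Real.mul_self_sqrt zero_le_two]
      linarith

end OuterProduct

section SpectralGap

variable {S : Matrix n n ℝ} {v : n → ℝ} {lam1 theta : ℝ}

theorem dotProduct_mulVec_le_of_orthogonal {c : ℝ}
    (h : ∀ w, w ⬝ᵥ w = 1 → w ⬝ᵥ v = 0 → w ⬝ᵥ S *ᵥ w ≤ c) {z : n → ℝ} (hz : z ⬝ᵥ v = 0) :
    z ⬝ᵥ S *ᵥ z ≤ c * (z ⬝ᵥ z) := by
  rcases eq_or_ne z 0 with rfl | hz0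
  · simp
  have ht : 0 < z ⬝ᵥ z := by simpa using dotProduct_self_star_pos_iff.mpr hz0
  set s := (√(z ⬝ᵥ z))⁻¹
  have hs : s * s * (z ⬝ᵥ z) = 1 := by
    rw [← mul_inv, Real.mul_self_sqrt ht.le, inv_mul_cancel₀ ht.ne']
  have hw := h (s • z)
    (by simp only [dotProduct_smul, smul_dotProduct, smul_eq_mul, ← mul_assoc, hs])
    (by rw [smul_dotProduct, hz, smul_zero])
  simp only [mulVec_smul, dotProduct_smul, smul_dotProduct, smul_eq_mul, ← mul_assoc] at hw
  calc z ⬝ᵥ S *ᵥ z = (s * s * (z ⬝ᵥ S *ᵥ z)) * (z ⬝ᵥ z) := by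
        linear_combination (z ⬝ᵥ S *ᵥ z) * hs.symm
    _ ≤ c * (z ⬝ᵥ z) := by gcongr

theorem dotProduct_mulVec_le_of_spectral_gap (hS : S.IsSymm) (hv : v ⬝ᵥ v = 1)
    (heig : S *ᵥ v = lam1 • v)
    (hgap : ∀ w, w ⬝ᵥ w = 1 → w ⬝ᵥ v = 0 → w ⬝ᵥ S *ᵥ w ≤ lam1 - theta) (x : n → ℝ) :
    x ⬝ᵥ S *ᵥ x ≤ lam1 * (x ⬝ᵥ x) - theta * (x ⬝ᵥ x - (x ⬝ᵥ v) ^ 2) := by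
  set c := x ⬝ᵥ v
  set z := x - c • v
  have hzv : z ⬝ᵥ v = 0 := by simp [z, sub_dotProduct, hv, c]
  have hvSz : v ⬝ᵥ S *ᵥ z = 0 := by
    rw [dotProduct_mulVec, ← mulVec_transpose, hS.eq, heig, smul_dotProduct, dotProduct_comm, hzv,
      smul_zero]
  have hx : x = c • v + z := by simp [z]
  have hzz : z ⬝ᵥ z = x ⬝ᵥ x - c ^ 2 := by
    rw [hx]
    simp only [add_dotProduct, dotProduct_add, smul_dotProduct, dotProduct_smul, smul_eq_mul, hzv,
      dotProduct_comm v z, hv]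
    ring
  have hxSx : x ⬝ᵥ S *ᵥ x = c ^ 2 * lam1 + z ⬝ᵥ S *ᵥ z := by
    rw [hx]
    simp only [mulVec_add, mulVec_smul, heig, add_dotProduct, dotProduct_add, smul_dotProduct,
      dotProduct_smul, smul_eq_mul, hzv, hvSz, hv]
    ring
  rw [hxSx]
  linear_combination dotProduct_mulVec_le_of_orthogonal hgap hzv + (lam1 - theta) * hzz

theorem le_trace_mul_vecMulVec_sub_of_spectral_gap [DecidableEq n] {M : Matrix n n ℝ}
    (hS : S.IsSymm) (hv : v ⬝ᵥ v = 1) (heig : S *ᵥ v = lam1 • v)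
    (hgap : ∀ w, w ⬝ᵥ w = 1 → w ⬝ᵥ v = 0 → w ⬝ᵥ S *ᵥ w ≤ lam1 - theta)
    (hM : M.PosSemidef) (hMtr : M.trace = 1) :
    theta * (1 - v ⬝ᵥ M *ᵥ v) ≤ (S * (vecMulVec v v - M)).trace := by
  have hA : ∀ x, 0 ≤ x ⬝ᵥ (lam1 • 1 - S - theta • (1 - vecMulVec v v)) *ᵥ x := by
    intro x
    have := dotProduct_mulVec_le_of_spectral_gap hS hv heig hgap x
    simp only [sub_mulVec, smul_mulVec, one_mulVec, vecMulVec_mulVec, dotProduct_sub,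
      dotProduct_smul, smul_eq_mul, op_smul_eq_smul, dotProduct_comm v x]
    linarith
  have htr := trace_mul_nonneg_of_posSemidef hA hM
  simp only [sub_mul, smul_mul, one_mul, trace_sub, trace_smul, vecMulVec_mul, trace_vecMulVec,
    hMtr, smul_eq_mul] at htr
  rw [dotProduct_comm, ← dotProduct_mulVec] at htr
  rw [Matrix.mul_sub, trace_sub, mul_vecMulVec, trace_vecMulVec, heig, smul_dotProduct, hv,
    smul_eq_mul]
  linarith

end SpectralGap

theorem trace_mul_le_trace_mul_add_sum_abs {S T D : Matrix n n ℝ} {lam : ℝ}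
    (h : ∀ i j, |T i j - S i j| ≤ lam) :
    (S * D).trace ≤ (T * D).trace + lam * ∑ i, ∑ j, |D i j| := by
  have hdiff : (S * D).trace - (T * D).trace ≤ lam * ∑ i, ∑ j, |D j i| := by
    rw [← trace_sub, ← Matrix.sub_mul, Finset.mul_sum]
    refine Finset.sum_le_sum fun i _ => ?_
    rw [Finset.mul_sum]
    refine Finset.sum_le_sum fun j _ => ?_
    calc (S - T) i j * D j i ≤ |(S - T) i j| * |D j i| :=
        (le_abs_self _).trans_eq (abs_mul _ _)
      _ ≤ lam * |D j i| := by
        gcongr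
        rw [sub_apply, abs_sub_comm]
        exact h i j
  rw [Finset.sum_comm] at hdiff
  linarith

theorem sum_sum_abs_le_card_mul_frobenius_norm (A : Matrix n n ℝ) (E : Finset n) :
    ∑ i ∈ E, ∑ j ∈ E, |A i j| ≤ #E * ‖A‖ := by
  rw [← Finset.sum_product']
  refine abs_le_of_sq_le_sq' ?_ (by positivity) |>.2
  calc (∑ q ∈ E ×ˢ E, |A q.1 q.2|) ^ 2 ≤ #(E ×ˢ E) * ∑ q ∈ E ×ˢ E, |A q.1 q.2| ^ 2 :=
        sq_sum_le_card_mul_sum_sq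
    _ ≤ #(E ×ˢ E) * ∑ q : n × n, A q.1 q.2 ^ 2 := by
      simp_rw [sq_abs]
      gcongr
      exact Finset.subset_univ _
    _ = (#E * ‖A‖) ^ 2 := by
      rw [card_product, mul_pow, frobenius_norm_sq, Fintype.sum_prod_type]
      push_cast
      ring

theorem sum_abs_sub_sum_abs_add_sum_abs_sub_le (A B : Matrix n n ℝ) (E : Finset n)
    (hA : ∀ i j, A i j ≠ 0 → i ∈ E ∧ j ∈ E) :
    ∑ i, ∑ j, |A i j| - ∑ i, ∑ j, |B i j| + ∑ i, ∑ j, |(A - B) i j|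
      ≤ 2 * ∑ i ∈ E, ∑ j ∈ E, |(A - B) i j| := by
  set f := fun i j => |A i j| - |B i j| + |(A - B) i j|
  have hf : ∀ i j, f i j ≤ 2 * |(A - B) i j| := fun i j => by
    have := abs_sub_abs_le_abs_sub (A i j) (B i j)
    simp only [f, sub_apply] at this ⊢
    linarith
  have hf0 : ∀ i j, ¬(i ∈ E ∧ j ∈ E) → f i j = 0 := fun i j hij => by
    simp [f, not_ne_iff.mp (mt (hA i j) hij)]
  calc ∑ i, ∑ j, |A i j| - ∑ i, ∑ j, |B i j| + ∑ i, ∑ j, |(A - B) i j|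
      = ∑ i, ∑ j, f i j := by simp only [f, Finset.sum_add_distrib, Finset.sum_sub_distrib]
    _ = ∑ i ∈ E, ∑ j ∈ E, f i j := by
      rw [← Finset.sum_subset (Finset.subset_univ E) fun i _ hi =>
        Finset.sum_eq_zero fun j _ => hf0 i j fun h => hi h.1]
      refine Finset.sum_congr rfl fun i _ => ?_
      exact (Finset.sum_subset (Finset.subset_univ E) fun j _ hj => hf0 i j fun h => hj h.2).symm
    _ ≤ ∑ i ∈ E, ∑ j ∈ E, 2 * |(A - B) i j| := by gcongr with i _ j _; exact hf i j
    _ = 2 * ∑ i ∈ E, ∑ j ∈ E, |(A - B) i j| := by simp only [Finset.mul_sum]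

theorem sum_abs_vecMulVec_sub_le {x : n → ℝ} {k : ℕ}
    (hk : #(univ.filter fun i => x i ≠ 0) ≤ k) (M : Matrix n n ℝ) :
    ∑ i, ∑ j, |vecMulVec x x i j| - ∑ i, ∑ j, |M i j| + ∑ i, ∑ j, |(vecMulVec x x - M) i j|
      ≤ 2 * k * ‖vecMulVec x x - M‖ := by
  set E := univ.filter fun i => x i ≠ 0
  have hsupp : ∀ i j, vecMulVec x x i j ≠ 0 → i ∈ E ∧ j ∈ E :=
    fun i j h => by simpa [E, vecMulVec_apply, not_or] using h
  calc _ ≤ 2 * ∑ i ∈ E, ∑ j ∈ E, |(vecMulVec x x - M) i j| :=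
        sum_abs_sub_sum_abs_add_sum_abs_sub_le _ M E hsupp
    _ ≤ 2 * (#E * ‖vecMulVec x x - M‖) := by
        gcongr; exact sum_sum_abs_le_card_mul_frobenius_norm _ _
    _ ≤ 2 * k * ‖vecMulVec x x - M‖ := by
        rw [← mul_assoc]; gcongr

theorem half_mul_frobenius_norm_vecMulVec_sub_sq_le [DecidableEq n] {S T M : Matrix n n ℝ}
    {v : n → ℝ} {k : ℕ} {lam1 theta lam eps : ℝ} (hS : S.IsSymm) (hv : v ⬝ᵥ v = 1)
    (hk : #(univ.filter fun i => v i ≠ 0) ≤ k) (heig : S *ᵥ v = lam1 • v)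
    (hgap : ∀ w, w ⬝ᵥ w = 1 → w ⬝ᵥ v = 0 → w ⬝ᵥ S *ᵥ w ≤ lam1 - theta)
    (hclose : ∀ i j, |T i j - S i j| ≤ lam) (htheta : 0 ≤ theta) (hlam : 0 ≤ lam)
    (hM : M.PosSemidef) (hMtr : M.trace = 1)
    (hopt : (T * vecMulVec v v).trace - lam * ∑ i, ∑ j, |vecMulVec v v i j| ≤
      (T * M).trace - lam * ∑ i, ∑ j, |M i j| + eps) :
    theta / 2 * ‖vecMulVec v v - M‖ ^ 2 ≤ 2 * lam * k * ‖vecMulVec v v - M‖ + eps := by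
  have hsparse := sum_abs_vecMulVec_sub_le hk M
  have hMnorm : ‖M‖ ≤ 1 := hMtr ▸ hM.frobenius_norm_le_trace
  calc theta / 2 * ‖vecMulVec v v - M‖ ^ 2 ≤ theta / 2 * (2 * (1 - v ⬝ᵥ M *ᵥ v)) := by
        gcongr; exact frobenius_norm_vecMulVec_sub_sq_le hv hMnorm
    _ = theta * (1 - v ⬝ᵥ M *ᵥ v) := by ring
    _ ≤ (S * (vecMulVec v v - M)).trace :=
        le_trace_mul_vecMulVec_sub_of_spectral_gap hS hv heig hgap hM hMtr
    _ ≤ (T * (vecMulVec v v - M)).trace + lam * ∑ i, ∑ j, |(vecMulVec v v - M) i j| :=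
        trace_mul_le_trace_mul_add_sum_abs hclose
    _ ≤ 2 * lam * k * ‖vecMulVec v v - M‖ + eps := by
        rw [Matrix.mul_sub, trace_sub]
        linarith [mul_le_mul_of_nonneg_left hsparse hlam]

end Matrix

theorem stmt_11_general (p k : ℕ) (S Shat Mhat : Matrix (Fin p) (Fin p) ℝ)
    (hSsymm : S.IsSymm)
    (lam1 theta lam eps : ℝ) (htheta : 0 < theta) (hlam : 0 < lam) (heps : 0 ≤ eps)
    (v : Fin p → ℝ) (hv : ∑ i, v i ^ 2 = 1)
    (hv0 : (Finset.univ.filter (fun j => v j ≠ 0)).card ≤ k)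
    (heig : S.mulVec v = lam1 • v)
    (hgap : ∀ w : Fin p → ℝ, (∑ i, w i ^ 2 = 1) → (∑ i, w i * v i = 0) →
      ∑ i, w i * S.mulVec w i ≤ lam1 - theta)
    (hclose : ∀ i j, |Shat i j - S i j| ≤ lam)
    (hMhat : Mhat.PosSemidef) (hMtr : Mhat.trace = 1)
    (hopt : ∀ M : Matrix (Fin p) (Fin p) ℝ, M.PosSemidef → M.trace = 1 →
      (Shat * M).trace - lam * (∑ i, ∑ j, |M i j|) ≤
        (Shat * Mhat).trace - lam * (∑ i, ∑ j, |Mhat i j|) + eps)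
    (vhat : Fin p → ℝ) (hvhat : ∑ i, vhat i ^ 2 = 1)
    (hlead : ∀ u : Fin p → ℝ, (∑ i, u i ^ 2 = 1) →
      ∑ i, u i * Mhat.mulVec u i ≤ ∑ i, vhat i * Mhat.mulVec vhat i) :
    Real.sqrt (∑ i, ∑ j, (vhat i * vhat j - Mhat i j) ^ 2)
      ≤ Real.sqrt (∑ i, ∑ j, (v i * v j - Mhat i j) ^ 2) ∧
    Real.sqrt (1 - (∑ i, vhat i * v i) ^ 2)
      ≤ Real.sqrt 2 * Real.sqrt (∑ i, ∑ j, (v i * v j - Mhat i j) ^ 2) ∧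
    Real.sqrt (1 - (∑ i, vhat i * v i) ^ 2)
      ≤ 4 * Real.sqrt 2 * lam * k / theta + 2 * Real.sqrt (eps / theta) := by
  have hsq : ∀ x : Fin p → ℝ, ∑ i, x i ^ 2 = x ⬝ᵥ x := fun x => by simp only [dotProduct, sq]
  have hnorm : ∀ x : Fin p → ℝ,
      √(∑ i, ∑ j, (x i * x j - Mhat i j) ^ 2) = ‖vecMulVec x x - Mhat‖ :=
    fun x => (frobenius_norm_eq_sqrt _).symm
  simp only [hnorm]
  rw [hsq] at hv hvhat
  set D := ‖vecMulVec v v - Mhat‖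
  have hclosest : ‖vecMulVec vhat vhat - Mhat‖ ≤ D :=
    frobenius_norm_vecMulVec_sub_le_of_dotProduct_mulVec_le hvhat hv (hlead v (hsq v ▸ hv))
  have hangle : √(1 - (vhat ⬝ᵥ v) ^ 2) ≤ √2 * D :=
    sqrt_one_sub_sq_dotProduct_le hvhat hv hclosest
  have hvv : (vecMulVec v v).PosSemidef := by simpa using posSemidef_vecMulVec_self_star v
  have hD : D ≤ 4 * lam * k / theta + √(2 * eps / theta) := by
    refine le_add_of_sq_le_mul_add_sq (by positivity) (by positivity) ?_
    have := half_mul_frobenius_norm_vecMulVec_sub_sq_le hSsymm hv hv0 heig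
      (fun w hw => hgap w (hsq w ▸ hw)) hclose htheta.le hlam.le hMhat hMtr
      (hopt _ hvv (by rw [trace_vecMulVec, hv]))
    rw [Real.sq_sqrt (by positivity)]
    field_simp
    linarith
  refine ⟨hclosest, hangle, hangle.trans ?_⟩
  calc √2 * D ≤ √2 * (4 * lam * k / theta + √(2 * eps / theta)) := by gcongr
    _ = 4 * √2 * lam * k / theta + 2 * √(eps / theta) := by
      rw [mul_add, ← Real.sqrt_mul zero_le_two,
        show 2 * (2 * eps / theta) = 2 ^ 2 * (eps / theta) by ring,
        Real.sqrt_mul (by positivity), Real.sqrt_sq zero_le_two]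
      ring

/-- Under the SDP hypotheses, a unit leading eigenvector `v̂` of `M̂` satisfies
`‖v̂v̂ᵀ - M̂‖₂ ≤ ‖vvᵀ - M̂‖₂` and `L(v̂,v) ≤ √2 ‖vvᵀ - M̂‖₂ ≤ 4√2 λk/θ + 2√(ε/θ)`. -/
theorem stmt_11 (p k : ℕ) (S Shat Mhat : Matrix (Fin p) (Fin p) ℝ)
    (hSsymm : S.IsSymm) (hSpsd : S.PosSemidef) (hShatsymm : Shat.IsSymm)
    (lam1 theta lam eps : ℝ) (htheta : 0 < theta) (hlam : 0 < lam) (heps : 0 ≤ eps)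
    (v : Fin p → ℝ) (hv : ∑ i, v i ^ 2 = 1)
    (hv0 : (Finset.univ.filter (fun j => v j ≠ 0)).card ≤ k)
    (heig : S.mulVec v = lam1 • v)
    (hgap : ∀ w : Fin p → ℝ, (∑ i, w i ^ 2 = 1) → (∑ i, w i * v i = 0) →
      ∑ i, w i * S.mulVec w i ≤ lam1 - theta)
    (hclose : ∀ i j, |Shat i j - S i j| ≤ lam)
    (hMhat : Mhat.PosSemidef) (hMtr : Mhat.trace = 1)
    (hopt : ∀ M : Matrix (Fin p) (Fin p) ℝ, M.PosSemidef → M.trace = 1 →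
      (Shat * M).trace - lam * (∑ i, ∑ j, |M i j|) ≤
        (Shat * Mhat).trace - lam * (∑ i, ∑ j, |Mhat i j|) + eps)
    (vhat : Fin p → ℝ) (hvhat : ∑ i, vhat i ^ 2 = 1)
    (hlead : ∀ u : Fin p → ℝ, (∑ i, u i ^ 2 = 1) →
      ∑ i, u i * Mhat.mulVec u i ≤ ∑ i, vhat i * Mhat.mulVec vhat i) :
    Real.sqrt (∑ i, ∑ j, (vhat i * vhat j - Mhat i j) ^ 2)
      ≤ Real.sqrt (∑ i, ∑ j, (v i * v j - Mhat i j) ^ 2) ∧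
    Real.sqrt (1 - (∑ i, vhat i * v i) ^ 2)
      ≤ Real.sqrt 2 * Real.sqrt (∑ i, ∑ j, (v i * v j - Mhat i j) ^ 2) ∧
    Real.sqrt (1 - (∑ i, vhat i * v i) ^ 2)
      ≤ 4 * Real.sqrt 2 * lam * k / theta + 2 * Real.sqrt (eps / theta) :=
  stmt_11_general p k S Shat Mhat hSsymm lam1 theta lam eps htheta hlam heps v hv hv0 heig hgap
    hclose hMhat hMtr hopt vhat hvhat hlead
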